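/- The ideal I₀' ⊆ ℚ[x,y] generated by x⁴, g₁ = 8x³y³ + 3x²y⁴ - 8x³y² - 4x³y, g₂ = 3x²y⁵ + 3x²y⁴ - 12x³y² - 4x³y, g₃ = 48xy⁷ + 12y⁸ - 24xy⁶ + 12y⁷ + 45x²y⁴ - 72xy⁵ - 448x³y² + 144x²y³ - 12xy⁴ - 196x³y + 24x²y² + 12x³ - 6x²y, and g₄ = 24y⁹ + 60y⁸ - 216xy⁶ + 36y⁷ + 525x²y⁴ - 240xy⁵ - 1056x³y² + 480x²y³ - 36xy⁴ - 524x³y + 60x²y² + 36x³ - 18x²y has the property that its zero locus in ℂ² consists exactly of the two points (0,0) and (0,-1). -/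
import Mathlib


def g₁ (x y : ℂ) : ℂ :=
  8 * x ^ 3 * y ^ 3 + 3 * x ^ 2 * y ^ 4 - 8 * x ^ 3 * y ^ 2 - 4 * x ^ 3 * y

def g₂ (x y : ℂ) : ℂ :=
  3 * x ^ 2 * y ^ 5 + 3 * x ^ 2 * y ^ 4 - 12 * x ^ 3 * y ^ 2 - 4 * x ^ 3 * y

def g₃ (x y : ℂ) : ℂ :=
  48 * x * y ^ 7 + 12 * y ^ 8 - 24 * x * y ^ 6 + 12 * y ^ 7 + 45 * x ^ 2 * y ^ 4
    - 72 * x * y ^ 5 - 448 * x ^ 3 * y ^ 2 + 144 * x ^ 2 * y ^ 3 - 12 * x * y ^ 4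
    - 196 * x ^ 3 * y + 24 * x ^ 2 * y ^ 2 + 12 * x ^ 3 - 6 * x ^ 2 * y

def g₄ (x y : ℂ) : ℂ :=
  24 * y ^ 9 + 60 * y ^ 8 - 216 * x * y ^ 6 + 36 * y ^ 7 + 525 * x ^ 2 * y ^ 4
    - 240 * x * y ^ 5 - 1056 * x ^ 3 * y ^ 2 + 480 * x ^ 2 * y ^ 3 - 36 * x * y ^ 4
    - 524 * x ^ 3 * y + 60 * x ^ 2 * y ^ 2 + 36 * x ^ 3 - 18 * x ^ 2 * y

theorem zero_locus_of_limit_ideal :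
    ∀ x y : ℂ,
      (x ^ 4 = 0 ∧ g₁ x y = 0 ∧ g₂ x y = 0 ∧ g₃ x y = 0 ∧ g₄ x y = 0) ↔
        ((x, y) = (0, 0) ∨ (x, y) = (0, -1)) := by
  intro x y
  constructor
  · rintro ⟨hx4, -, -, h3, -⟩
    have hx : x = 0 := by
      have := pow_eq_zero_iff (n := 4) (by norm_num) |>.mp hx4
      exact this
    subst hx
    simp only [g₃] at h3
    ring_nf at h3
    have h : 12 * y ^ 7 * (y + 1) = 0 := by linear_combination h3
    rcases mul_eq_zero.mp h with h | h
    · rcases mul_eq_zero.mp h with h | h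
      · norm_num at h
      · left; simp [pow_eq_zero_iff] at h; simp [h]
    · right; simp [Prod.ext_iff, eq_neg_of_add_eq_zero_left h]
  · rintro (h | h) <;> (simp only [Prod.ext_iff, Prod.mk.injEq] at h; obtain ⟨hx, hy⟩ := h; subst hx; subst hy; norm_num [g₁, g₂, g₃, g₄])
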